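/- FHR moment function for the average structural function (ASF) in the Weibull MPH model (equation B.9). Consider the MPH model with Weibull baseline hazard Λ_α(y) = y^α, λ_α(y) = α y^{α−1} (α > 0), with T ≥ 2 periods, and fix a target (ỹ₋, x̃) ∈ (0,∞) × ℝ^k. Let h(y^T, x^T, a) = Γ(1 + 1/α) e^{−x̃'β/α − γ ỹ₋/α} e^{−a/α} (the conditional mean of Y_t given X_t = x̃, Y_{t−1} = ỹ₋, A = a) and φ(y^T, x^T) = e^{−x̃'β/α − γ ỹ₋/α} · (Γ(1 + 1/α) Γ(T) / Γ(T + 1/α)) · p̄^{1/α}, where p̄ = Σ_{t=1}^T ρ_θ(y_t, y_{t−1}, x_t). Then: (i) ∫ (φ − h) ∏_{t=1}^T f_θ(y_t | y_{t−1}, x_t, a) dy_1⋯dy_T = 0 for all (y_0, x_1,…,x_T, a); and (ii) for each s = 2,…,T the partial integral ∫ (φ − h) ∏_{t=s}^T f_θ(y_t | y_{t−1}, x_t, a) dy_s⋯dy_T does not depend on (x_s,…,x_T). Consequently, under every feedback process and heterogeneity distribution making φ and h integrable, E[φ(Y^T, X^T)] equals the average structural function Γ(1 + 1/α) e^{−x̃'β/α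 − γ ỹ₋/α} E[e^{−A/α}]. -/

import Mathlib

/-!
Under `f_θ(· | y₋, x, a)` the variable `ρ_θ(Y, y₋, x) e^a` is standard exponential whatever `y₋`
and `x` are. Integrating out `y_T, …, y_s` one period at a time therefore replaces `p̄` by
`p̄_{s-1} + e^{-a} (U_s + ⋯ + U_T)` with i.i.d. standard exponentials `U_t`, where `p̄_{s-1}` is the
partial sum up to period `s - 1`: the covariates `x_s, …, x_T` drop out, which is (ii), and the
same value results under any feedback kernels. For `s = 1` the sum is `Gamma(T, 1)`-distributed and
`𝔼[(e^{-a} V)^{1/α}] = e^{-a/α} Γ(T + 1/α) / Γ(T)` for `V ∼ Gamma(T, 1)`; the constant in `φ` turns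
this into `Γ(1 + 1/α) e^{-a/α}`, the conditional mean `h`. This gives (i), and integrating over the
initial conditions and `A` gives the identity for `E[φ]`.
-/

open MeasureTheory ProbabilityTheory Function Set
open scoped ENNReal

noncomputable section

section Framework

variable {Y X A : Type*} [MeasurableSpace Y] [MeasurableSpace X] [MeasurableSpace A]

/-- Iterated partial integral of `φ` against `∏_{r=t}^{t+n-1} f_r dμ(y_r)`. -/
noncomputable def iterInt (μ : Measure Y) (f : ℕ → Y → Y → X → A → ℝ)
    (φ : (ℕ → Y) → (ℕ → X) → ℝ) (a : A) (x : ℕ → X) :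
    ℕ → ℕ → (ℕ → Y) → ℝ
  | 0, _, y => φ y x
  | n + 1, t, y =>
      ∫ yt, f t yt (y (t - 1)) (x t) a *
        iterInt μ f φ a x n (t + 1) (Function.update y t yt) ∂μ

/-- Expected value of `φ(Y^T, X^T)` given heterogeneity `a` and the history up to
period `t`, with `n` outcome periods remaining, under the feedback kernels `g`. -/
noncomputable def pathInt (μ : Measure Y) (f : ℕ → Y → Y → X → A → ℝ)
    (g : ℕ → Kernel ((ℕ → Y) × (ℕ → X) × A) X)
    (φ : (ℕ → Y) → (ℕ → X) → ℝ) (a : A) :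
    ℕ → ℕ → (ℕ → Y) → (ℕ → X) → ℝ
  | 0, _, y, x => φ y x
  | 1, t, y, x =>
      ∫ yt, f t yt (y (t - 1)) (x t) a * φ (Function.update y t yt) x ∂μ
  | n + 2, t, y, x =>
      ∫ yt, f t yt (y (t - 1)) (x t) a *
        ∫ xt, pathInt μ f g φ a (n + 1) (t + 1) (Function.update y t yt)
            (Function.update x (t + 1) xt)
          ∂(g (t + 1) (Function.update y t yt, x, a)) ∂μ

/-- `ℝ≥0∞`-valued analogue of `pathInt`. -/
noncomputable def pathLint (μ : Measure Y) (f : ℕ → Y → Y → X → A → ℝ)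
    (g : ℕ → Kernel ((ℕ → Y) × (ℕ → X) × A) X)
    (φ : (ℕ → Y) → (ℕ → X) → ℝ≥0∞) (a : A) :
    ℕ → ℕ → (ℕ → Y) → (ℕ → X) → ℝ≥0∞
  | 0, _, y, x => φ y x
  | 1, t, y, x =>
      ∫⁻ yt, ENNReal.ofReal (f t yt (y (t - 1)) (x t) a) * φ (Function.update y t yt) x ∂μ
  | n + 2, t, y, x =>
      ∫⁻ yt, ENNReal.ofReal (f t yt (y (t - 1)) (x t) a) *
        ∫⁻ xt, pathLint μ f g φ a (n + 1) (t + 1) (Function.update y t yt)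
            (Function.update x (t + 1) xt)
          ∂(g (t + 1) (Function.update y t yt, x, a)) ∂μ

end Framework

section WeibullMPH

variable {k : ℕ}

/-- `ρ_θ(y, y₋, x) = y^α e^{γ y₋ + x'β}` in the Weibull MPH model. -/
noncomputable def weibullRho (α γ : ℝ) (β : Fin k → ℝ) (y ylag : ℝ) (x : Fin k → ℝ) : ℝ :=
  y ^ α * Real.exp (γ * ylag + ∑ i, x i * β i)

/-- Conditional duration density of the Weibull MPH model:
`f_θ(y | y₋, x, a) = α y^{α−1} e^{γ y₋ + x'β + a} exp(−y^α e^{γ y₋ + x'β + a})`. -/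
noncomputable def weibullDensity (α γ : ℝ) (β : Fin k → ℝ)
    (y ylag : ℝ) (x : Fin k → ℝ) (a : ℝ) : ℝ :=
  α * y ^ (α - 1) * Real.exp (γ * ylag + ∑ i, x i * β i + a) *
    Real.exp (-(y ^ α * Real.exp (γ * ylag + ∑ i, x i * β i + a)))

/-- `p̄ = Σ_{t=1}^T ρ_θ(y_t, y_{t−1}, x_t)` along a trajectory. -/
noncomputable def weibullPbar (α γ : ℝ) (β : Fin k → ℝ) (T : ℕ)
    (y : ℕ → ℝ) (x : ℕ → Fin k → ℝ) : ℝ :=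
  ∑ t ∈ Finset.Icc 1 T, weibullRho α γ β (y t) (y (t - 1)) (x t)

open Real

theorem rpow_add_mul_le_mul_one_add_rpow {p c d u : ℝ} (hp : 0 ≤ p) (hc : 0 ≤ c) (hd : 0 ≤ d)
    (hu : 0 ≤ u) :
    (c + u * d) ^ p ≤ (c + d) ^ p * (1 + u ^ p) := by
  have hcd : 0 ≤ (c + d) ^ p := by positivity
  rcases le_total u 1 with hu1 | hu1
  · calc (c + u * d) ^ p ≤ (c + d) ^ p := by gcongr; nlinarith
      _ ≤ (c + d) ^ p * (1 + u ^ p) := le_mul_of_one_le_right hcd (by simp; positivity)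
  · calc (c + u * d) ^ p ≤ ((c + d) * u) ^ p := by gcongr; nlinarith
      _ = (c + d) ^ p * u ^ p := mul_rpow (by positivity) hu
      _ ≤ (c + d) ^ p * (1 + u ^ p) := by gcongr; linarith

theorem integrableOn_pow_mul_exp_neg_mul_rpow_add {p c d : ℝ} (hp : 0 ≤ p) (hc : 0 ≤ c)
    (hd : 0 ≤ d) (n : ℕ) :
    IntegrableOn (fun u => u ^ n * exp (-u) * (c + u * d) ^ p) (Ioi 0) := by
  have hGamma (s : ℝ) (hs : 0 ≤ s) : IntegrableOn (fun u => exp (-u) * u ^ (n + s)) (Ioi 0) := by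
    simpa using GammaIntegral_convergent (s := n + s + 1) (by positivity)
  refine (((hGamma 0 le_rfl).add (hGamma p hp)).const_mul ((c + d) ^ p)).mono' ?_ ?_
  · exact (by fun_prop : Continuous fun u => u ^ n * exp (-u)).aestronglyMeasurable.mul
      ((continuous_const.add (continuous_id.mul continuous_const)).rpow_const
        fun _ => Or.inr hp).aestronglyMeasurable
  · filter_upwards [ae_restrict_mem measurableSet_Ioi] with u (hu : 0 < u)
    have hnn : 0 ≤ u ^ n * exp (-u) * (c + u * d) ^ p := by positivity
    simp only [Pi.add_apply, norm_of_nonneg hnn, add_zero, rpow_add hu, rpow_natCast]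
    calc u ^ n * exp (-u) * (c + u * d) ^ p
        ≤ u ^ n * exp (-u) * ((c + d) ^ p * (1 + u ^ p)) := by
          gcongr; exact rpow_add_mul_le_mul_one_add_rpow hp hc hd hu.le
      _ = (c + d) ^ p * (exp (-u) * u ^ n + exp (-u) * (u ^ n * u ^ p)) := by ring

theorem setIntegral_Ioi_eq_setIntegral_Ioi_zero_add (F : ℝ → ℝ) (v : ℝ) :
    ∫ w in Ioi v, F w = ∫ u in Ioi 0, F (v + u) := by
  rw [← integral_indicator measurableSet_Ioi, ← integral_indicator measurableSet_Ioi,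
    ← integral_add_left_eq_self _ v]
  congr 1 with u
  simp [indicator]

theorem integral_Ioi_rpow_mul_comp {α κ : ℝ} (hα : 0 < α) (hκ : 0 < κ) (F : ℝ → ℝ) :
    ∫ y in Ioi 0, α * y ^ (α - 1) * κ * F (y ^ α * κ) = ∫ v in Ioi 0, F v := by
  calc ∫ y in Ioi 0, α * y ^ (α - 1) * κ * F (y ^ α * κ)
      = ∫ y in Ioi 0, (α * y ^ (α - 1)) • (κ * F (y ^ α * κ)) :=
        integral_congr_ae (Filter.Eventually.of_forall fun y => by
          dsimp only
          rw [smul_eq_mul]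
          ring)
    _ = ∫ v in Ioi 0, κ * F (v * κ) :=
        integral_comp_rpow_Ioi_of_pos (g := fun v => κ * F (v * κ)) hα
    _ = ∫ v in Ioi 0, F v := by
        rw [integral_const_mul, integral_comp_mul_right_Ioi F 0 hκ, zero_mul, smul_eq_mul,
          mul_inv_cancel_left₀ hκ.ne']

theorem setIntegral_Ioi_indicator_Iio_sub_pow {w : ℝ} (hw : 0 ≤ w) (n : ℕ) (K : ℝ) :
    ∫ v in Ioi 0, (Iio w).indicator (fun v => (w - v) ^ n * K) v = w ^ (n + 1) / (n + 1) * K := by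
  rw [setIntegral_indicator measurableSet_Iio, Ioi_inter_Iio, integral_mul_const,
    ← integral_Ioc_eq_integral_Ioo, ← intervalIntegral.integral_of_le hw,
    intervalIntegral.integral_comp_sub_left (fun v => v ^ n) w]
  simp [integral_pow]

theorem integrableOn_Ioi_indicator_Iio_sub_pow (w : ℝ) (n : ℕ) (K : ℝ) :
    IntegrableOn ((Iio w).indicator (fun v => (w - v) ^ n * K)) (Ioi 0) := by
  rw [IntegrableOn, integrable_indicator_iff measurableSet_Iio, IntegrableOn,
    Measure.restrict_restrict measurableSet_Iio, Iio_inter_Ioi]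
  exact (by fun_prop : Continuous fun v => (w - v) ^ n * K).integrableOn_Icc.mono_set
    Ioo_subset_Icc_self

theorem integrable_indicator_lt_sub_pow_mul {K : ℝ → ℝ} {n : ℕ} (hKm : Measurable K)
    (hK : IntegrableOn (fun w => w ^ (n + 1) * K w) (Ioi 0)) :
    Integrable ({q : ℝ × ℝ | q.1 < q.2}.indicator fun q => (q.2 - q.1) ^ n * K q.2)
      ((volume.restrict (Ioi 0)).prod (volume.restrict (Ioi 0))) := by
  have hmeas : Measurable ({q : ℝ × ℝ | q.1 < q.2}.indicator fun q => (q.2 - q.1) ^ n * K q.2) :=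
    (by fun_prop : Measurable fun q : ℝ × ℝ => (q.2 - q.1) ^ n * K q.2).indicator
      (measurableSet_lt measurable_fst measurable_snd)
  rw [integrable_prod_iff' hmeas.aestronglyMeasurable]
  constructor
  · filter_upwards with w
    have hsection : (fun v => {q : ℝ × ℝ | q.1 < q.2}.indicator (fun q => (q.2 - q.1) ^ n * K q.2)
        (v, w)) = (Iio w).indicator (fun v => (w - v) ^ n * K w) := by
      ext v
      simp [indicator]
    rw [hsection]
    exact integrableOn_Ioi_indicator_Iio_sub_pow w n (K w)
  · refine (hK.norm.const_mul (n + 1 : ℝ)⁻¹).congr ?_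
    filter_upwards [ae_restrict_mem measurableSet_Ioi] with w (hw : 0 < w)
    have hnorm (v : ℝ) : ‖{q : ℝ × ℝ | q.1 < q.2}.indicator (fun q => (q.2 - q.1) ^ n * K q.2)
        (v, w)‖ = (Iio w).indicator (fun v => (w - v) ^ n * ‖K w‖) v := by
      by_cases h : v < w
      · simp [indicator, h, abs_of_pos (sub_pos.2 h)]
      · simp [indicator, h]
    rw [funext hnorm, setIntegral_Ioi_indicator_Iio_sub_pow hw.le, norm_mul,
      norm_of_nonneg (by positivity : 0 ≤ w ^ (n + 1))]
    ring

/-- Convolving the `Gamma(n + 1, 1)` density `uⁿ e⁻ᵘ / n!` with the exponential density gives the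
`Gamma(n + 2, 1)` density. -/
theorem integral_Ioi_integral_Ioi_pow_mul_exp_neg_add {G : ℝ → ℝ} {n : ℕ} (hGm : Measurable G)
    (hG : IntegrableOn (fun w => w ^ (n + 1) * exp (-w) * G w) (Ioi 0)) :
    IntegrableOn (fun v => ∫ u in Ioi 0, u ^ n * exp (-(v + u)) * G (v + u)) (Ioi 0) ∧
      ∫ v in Ioi 0, ∫ u in Ioi 0, u ^ n * exp (-(v + u)) * G (v + u) =
        (n + 1 : ℝ)⁻¹ * ∫ w in Ioi 0, w ^ (n + 1) * exp (-w) * G w := by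
  set H : ℝ × ℝ → ℝ := {q | q.1 < q.2}.indicator fun q => (q.2 - q.1) ^ n * (exp (-q.2) * G q.2)
  have hint : Integrable H ((volume.restrict (Ioi 0)).prod (volume.restrict (Ioi 0))) :=
    integrable_indicator_lt_sub_pow_mul (K := fun w => exp (-w) * G w) (by fun_prop)
      (by simpa only [mul_assoc] using hG)
  have inner_left {v : ℝ} (hv : 0 ≤ v) :
      ∫ w in Ioi 0, H (v, w) = ∫ u in Ioi 0, u ^ n * exp (-(v + u)) * G (v + u) := by
    have hH (w : ℝ) : H (v, w) = (Ioi v).indicator (fun w => (w - v) ^ n * (exp (-w) * G w)) w := by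
      simp [H, indicator]
    simp_rw [hH]
    rw [setIntegral_indicator measurableSet_Ioi, Ioi_inter_Ioi, max_eq_right hv,
      setIntegral_Ioi_eq_setIntegral_Ioi_zero_add]
    simp_rw [add_sub_cancel_left, mul_assoc]
  have inner_right {w : ℝ} (hw : 0 ≤ w) :
      ∫ v in Ioi 0, H (v, w) = (n + 1 : ℝ)⁻¹ * (w ^ (n + 1) * exp (-w) * G w) := by
    have hH (v : ℝ) : H (v, w) = (Iio w).indicator (fun v => (w - v) ^ n * (exp (-w) * G w)) v := by
      simp [H, indicator]
    simp_rw [hH, setIntegral_Ioi_indicator_Iio_sub_pow hw]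
    ring
  refine ⟨hint.integral_prod_left.congr ?_, ?_⟩
  · filter_upwards [ae_restrict_mem measurableSet_Ioi] with v (hv : 0 < v)
    exact inner_left hv.le
  calc ∫ v in Ioi 0, ∫ u in Ioi 0, u ^ n * exp (-(v + u)) * G (v + u)
      = ∫ v in Ioi 0, ∫ w in Ioi 0, H (v, w) :=
        setIntegral_congr_fun measurableSet_Ioi fun v hv => (inner_left (le_of_lt hv)).symm
    _ = ∫ w in Ioi 0, ∫ v in Ioi 0, H (v, w) := integral_integral_swap hint
    _ = ∫ w in Ioi 0, (n + 1 : ℝ)⁻¹ * (w ^ (n + 1) * exp (-w) * G w) :=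
        setIntegral_congr_fun measurableSet_Ioi fun w hw => inner_right (le_of_lt hw)
    _ = _ := integral_const_mul _ _

/-- `expSmoothing d G c = 𝔼[G (c + d U)]` for a standard exponential `U`. -/
def expSmoothing (d : ℝ) (G : ℝ → ℝ) (c : ℝ) : ℝ :=
  ∫ u in Ioi 0, exp (-u) * G (c + u * d)

open scoped Nat in
/-- `gammaMoment p d n c = 𝔼[(c + d V) ^ p]` for `V ∼ Gamma(n + 1, 1)`. -/
def gammaMoment (p d : ℝ) (n : ℕ) (c : ℝ) : ℝ :=
  (n ! : ℝ)⁻¹ * ∫ u in Ioi 0, u ^ n * exp (-u) * (c + u * d) ^ p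

section ExpSmoothing

open Nat

variable {p d : ℝ}

theorem expSmoothing_congr {F G : ℝ → ℝ} (hFG : EqOn F G (Ici 0)) (hd : 0 ≤ d) {c : ℝ}
    (hc : 0 ≤ c) : expSmoothing d F c = expSmoothing d G c :=
  setIntegral_congr_fun measurableSet_Ioi fun u (hu : 0 < u) => by
    rw [hFG (show 0 ≤ c + u * d by positivity)]

theorem expSmoothing_rpow : expSmoothing d (· ^ p) = gammaMoment p d 0 := by
  ext c
  simp [expSmoothing, gammaMoment]

theorem exp_neg_mul_gammaMoment_add (n : ℕ) (c v : ℝ) :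
    exp (-v) * gammaMoment p d n (c + v * d) =
      (n ! : ℝ)⁻¹ * ∫ u in Ioi 0, u ^ n * exp (-(v + u)) * (c + (v + u) * d) ^ p := by
  rw [gammaMoment, mul_left_comm, ← integral_const_mul]
  congr 1
  refine integral_congr_ae (Filter.Eventually.of_forall fun u => ?_)
  simp only [neg_add, exp_add]
  ring_nf

theorem integrableOn_exp_neg_mul_gammaMoment (hp : 0 ≤ p) (hd : 0 ≤ d) (n : ℕ) {c : ℝ}
    (hc : 0 ≤ c) :
    IntegrableOn (fun v => exp (-v) * gammaMoment p d n (c + v * d)) (Ioi 0) := by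
  simp_rw [exp_neg_mul_gammaMoment_add]
  exact ((integral_Ioi_integral_Ioi_pow_mul_exp_neg_add (G := fun w => (c + w * d) ^ p)
    (by fun_prop) (integrableOn_pow_mul_exp_neg_mul_rpow_add hp hc hd (n + 1))).1).const_mul _

theorem expSmoothing_gammaMoment (hp : 0 ≤ p) (hd : 0 ≤ d) (n : ℕ) {c : ℝ} (hc : 0 ≤ c) :
    expSmoothing d (gammaMoment p d n) c = gammaMoment p d (n + 1) c := by
  rw [expSmoothing]
  simp_rw [exp_neg_mul_gammaMoment_add]
  rw [integral_const_mul, (integral_Ioi_integral_Ioi_pow_mul_exp_neg_add (by fun_prop)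
    (integrableOn_pow_mul_exp_neg_mul_rpow_add hp hc hd (n + 1))).2, gammaMoment,
    factorial_succ]
  push_cast
  rw [← mul_assoc, mul_inv, mul_comm ((n ! : ℝ)⁻¹)]

theorem iterate_expSmoothing_rpow (hp : 0 ≤ p) (hd : 0 ≤ d) (n : ℕ) {c : ℝ} (hc : 0 ≤ c) :
    (expSmoothing d)^[n + 1] (· ^ p) c = gammaMoment p d n c := by
  induction n generalizing c with
  | zero => simp [expSmoothing_rpow]
  | succ n ih =>
    rw [iterate_succ_apply', expSmoothing_congr (fun c' hc' => ih hc') hd hc,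
      expSmoothing_gammaMoment hp hd n hc]

theorem integrableOn_exp_neg_mul_iterate_expSmoothing_rpow (hp : 0 ≤ p) (hd : 0 ≤ d) (n : ℕ)
    {c : ℝ} (hc : 0 ≤ c) :
    IntegrableOn (fun u => exp (-u) * (expSmoothing d)^[n] (· ^ p) (c + u * d)) (Ioi 0) := by
  cases n with
  | zero => simpa using integrableOn_pow_mul_exp_neg_mul_rpow_add hp hc hd 0
  | succ n =>
    refine (integrableOn_exp_neg_mul_gammaMoment hp hd n hc).congr_fun
      (fun u (hu : 0 < u) => ?_) measurableSet_Ioi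
    rw [iterate_expSmoothing_rpow hp hd n (by positivity)]

theorem iterate_expSmoothing_rpow_zero (hp : 0 ≤ p) (hd : 0 ≤ d) {T : ℕ} (hT : T ≠ 0) :
    (expSmoothing d)^[T] (· ^ p) 0 = d ^ p * Gamma (T + p) / Gamma T := by
  obtain ⟨n, rfl⟩ := exists_eq_succ_of_ne_zero hT
  rw [iterate_expSmoothing_rpow hp hd n le_rfl, gammaMoment, cast_succ, Gamma_nat_eq_factorial,
    Gamma_eq_integral (by positivity), inv_mul_eq_div, ← integral_const_mul]
  congr 1
  refine setIntegral_congr_fun measurableSet_Ioi fun u (hu : 0 < u) => ?_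
  rw [zero_add, mul_rpow hu.le hd, add_right_comm, add_sub_cancel_right, rpow_add hu,
    rpow_natCast]
  ring

theorem iterate_expSmoothing_affine (hp : 0 ≤ p) (hd : 0 ≤ d) (A B : ℝ) (n : ℕ) {c : ℝ}
    (hc : 0 ≤ c) :
    (expSmoothing d)^[n] (fun c => A * c ^ p - B) c = A * (expSmoothing d)^[n] (· ^ p) c - B := by
  induction n generalizing c with
  | zero => rfl
  | succ n ih =>
    rw [iterate_succ_apply', iterate_succ_apply', expSmoothing_congr (fun c' hc' => ih hc') hd hc]
    calc ∫ u in Ioi 0, exp (-u) * (A * (expSmoothing d)^[n] (· ^ p) (c + u * d) - B)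
        = ∫ u in Ioi 0, A * (exp (-u) * (expSmoothing d)^[n] (· ^ p) (c + u * d)) - B * exp (-u) :=
          integral_congr_ae (Filter.Eventually.of_forall fun u => by ring)
      _ = A * expSmoothing d ((expSmoothing d)^[n] (· ^ p)) c - B * ∫ u in Ioi 0, exp (-u) := by
          rw [integral_sub
            ((integrableOn_exp_neg_mul_iterate_expSmoothing_rpow hp hd n hc).const_mul A)
            ((integrableOn_exp_neg_Ioi 0).const_mul B), integral_const_mul, integral_const_mul]
          rfl
      _ = _ := by rw [integral_exp_neg_Ioi_zero, mul_one]

end ExpSmoothing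

section WeibullMPHIntegrals

variable {α : ℝ} (γ : ℝ) (β : Fin k → ℝ)

theorem integral_weibullDensity_mul_comp_add_weibullRho (hα : 0 < α) (ylag : ℝ)
    (x : Fin k → ℝ) (a : ℝ) (G : ℝ → ℝ) (c : ℝ) :
    ∫ y in Ioi 0, weibullDensity α γ β y ylag x a * G (c + weibullRho α γ β y ylag x) =
      expSmoothing (exp (-a)) G c := by
  set E := exp (γ * ylag + ∑ i, x i * β i) with hE
  rw [expSmoothing, ← integral_Ioi_rpow_mul_comp hα (κ := E * exp a)
    (mul_pos (exp_pos _) (exp_pos a)) (fun v => exp (-v) * G (c + v * exp (-a)))]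
  refine integral_congr_ae (Filter.Eventually.of_forall fun y => ?_)
  have hρ : y ^ α * (E * exp a) * exp (-a) = y ^ α * E := by
    rw [mul_assoc, mul_assoc, ← exp_add, add_neg_cancel, exp_zero, mul_one]
  have hD : exp (γ * ylag + ∑ i, x i * β i + a) = E * exp a := exp_add _ _
  simp only [weibullDensity, weibullRho, hD, ← hE, hρ]
  ring

theorem weibullPbar_zero (y : ℕ → ℝ) (x : ℕ → Fin k → ℝ) : weibullPbar α γ β 0 y x = 0 := by
  simp [weibullPbar]

theorem weibullPbar_succ_update (t : ℕ) (y : ℕ → ℝ) (x : ℕ → Fin k → ℝ) (z : ℝ) :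
    weibullPbar α γ β (t + 1) (update y (t + 1) z) x =
      weibullPbar α γ β t y x + weibullRho α γ β z (y t) (x (t + 1)) := by
  rw [weibullPbar, Finset.sum_Icc_succ_top (by omega), update_self, Nat.add_sub_cancel,
    update_of_ne (by omega)]
  congr 1
  refine Finset.sum_congr rfl fun r hr => ?_
  rw [update_of_ne (by grind), update_of_ne (by grind)]

theorem weibullPbar_congr_right {t : ℕ} (y : ℕ → ℝ) {x x' : ℕ → Fin k → ℝ}
    (h : ∀ r ≤ t, x r = x' r) : weibullPbar α γ β t y x = weibullPbar α γ β t y x' :=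
  Finset.sum_congr rfl fun r hr => by rw [h r (Finset.mem_Icc.1 hr).2]

theorem weibullPbar_update_of_lt {t s : ℕ} (hts : t < s) (y : ℕ → ℝ) (x : ℕ → Fin k → ℝ)
    (z : Fin k → ℝ) : weibullPbar α γ β t y (update x s z) = weibullPbar α γ β t y x :=
  weibullPbar_congr_right γ β y fun _ hr => update_of_ne (by omega) _ x

theorem iterInt_weibull_eq_iterate (hα : 0 < α) (Ψ : ℝ → ℝ) (a : ℝ) (x : ℕ → Fin k → ℝ)
    (T n : ℕ) {t : ℕ} (htn : t + n = T) (y : ℕ → ℝ) :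
    iterInt (volume.restrict (Ioi 0)) (fun _ y' ylag x' a' => weibullDensity α γ β y' ylag x' a')
        (fun y' x' => Ψ (weibullPbar α γ β T y' x')) a x n (t + 1) y =
      (expSmoothing (exp (-a)))^[n] Ψ (weibullPbar α γ β t y x) := by
  induction n generalizing t y with
  | zero => subst htn; rfl
  | succ n ih =>
    rw [iterInt, iterate_succ_apply', Nat.add_sub_cancel]
    simp_rw [ih (t := t + 1) (by omega), weibullPbar_succ_update]
    exact integral_weibullDensity_mul_comp_add_weibullRho γ β hα _ _ a _ _

theorem pathInt_weibull_eq_iterate (hα : 0 < α)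
    (g : ℕ → Kernel ((ℕ → ℝ) × (ℕ → Fin k → ℝ) × ℝ) (Fin k → ℝ)) [∀ t, IsMarkovKernel (g t)]
    (Ψ : ℝ → ℝ) (a : ℝ) (T n : ℕ) {t : ℕ} (htn : t + n + 1 = T) (y : ℕ → ℝ)
    (x : ℕ → Fin k → ℝ) :
    pathInt (volume.restrict (Ioi 0)) (fun _ y' ylag x' a' => weibullDensity α γ β y' ylag x' a')
        g (fun y' x' => Ψ (weibullPbar α γ β T y' x')) a (n + 1) (t + 1) y x =
      (expSmoothing (exp (-a)))^[n + 1] Ψ (weibullPbar α γ β t y x) := by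
  induction n generalizing t y x with
  | zero =>
    subst htn
    rw [pathInt, Nat.add_sub_cancel]
    simp_rw [weibullPbar_succ_update]
    exact integral_weibullDensity_mul_comp_add_weibullRho γ β hα _ _ a _ _
  | succ n ih =>
    rw [pathInt, iterate_succ_apply', Nat.add_sub_cancel]
    simp_rw [ih (t := t + 1) (by omega),
      weibullPbar_update_of_lt γ β (Nat.lt_succ_self (t + 1)),
      weibullPbar_succ_update, integral_const, probReal_univ, one_smul]
    exact integral_weibullDensity_mul_comp_add_weibullRho γ β hα _ _ a _ _

end WeibullMPHIntegrals

theorem asf_weibull_FHR_moment_general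
    (α : ℝ) (hα : 0 < α) (γ : ℝ) (β : Fin k → ℝ) (T : ℕ) (hT : 2 ≤ T)
    -- the target evaluation point (ỹ₋, x̃) ∈ (0,∞) × ℝ^k
    (ytillag : ℝ) (xtil : Fin k → ℝ) :
    -- condition (i)
    (∀ (y : ℕ → ℝ) (x : ℕ → Fin k → ℝ) (a : ℝ),
      iterInt (volume.restrict (Set.Ioi (0:ℝ)))
        (fun _ y' ylag x' a' => weibullDensity α γ β y' ylag x' a')
        (fun y' x' =>
          Real.exp (-((∑ i, xtil i * β i) / α) - γ * ytillag / α) *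
              (Real.Gamma (1 + 1 / α) * Real.Gamma T / Real.Gamma ((T : ℝ) + 1 / α)) *
              weibullPbar α γ β T y' x' ^ (1 / α) -
            Real.Gamma (1 + 1 / α) *
              Real.exp (-((∑ i, xtil i * β i) / α) - γ * ytillag / α) *
              Real.exp (-(a / α)))
        a x T 1 y = 0) ∧
    -- condition (ii)
    (∀ s, 2 ≤ s → s ≤ T → ∀ (y : ℕ → ℝ) (x x' : ℕ → Fin k → ℝ) (a : ℝ),
      (∀ i, i < s → x i = x' i) →
      iterInt (volume.restrict (Set.Ioi (0:ℝ)))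
        (fun _ y' ylag x'' a' => weibullDensity α γ β y' ylag x'' a')
        (fun y' x'' =>
          Real.exp (-((∑ i, xtil i * β i) / α) - γ * ytillag / α) *
              (Real.Gamma (1 + 1 / α) * Real.Gamma T / Real.Gamma ((T : ℝ) + 1 / α)) *
              weibullPbar α γ β T y' x'' ^ (1 / α) -
            Real.Gamma (1 + 1 / α) *
              Real.exp (-((∑ i, xtil i * β i) / α) - γ * ytillag / α) *
              Real.exp (-(a / α)))
        a x (T - s + 1) s y =
      iterInt (volume.restrict (Set.Ioi (0:ℝ)))
        (fun _ y' ylag x'' a' => weibullDensity α γ β y' ylag x'' a')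
        (fun y' x'' =>
          Real.exp (-((∑ i, xtil i * β i) / α) - γ * ytillag / α) *
              (Real.Gamma (1 + 1 / α) * Real.Gamma T / Real.Gamma ((T : ℝ) + 1 / α)) *
              weibullPbar α γ β T y' x'' ^ (1 / α) -
            Real.Gamma (1 + 1 / α) *
              Real.exp (-((∑ i, xtil i * β i) / α) - γ * ytillag / α) *
              Real.exp (-(a / α)))
        a x' (T - s + 1) s y) ∧
    -- consequence: E[φ(Y^T, X^T)] equals the average structural function
    (∀ (ν : Measure (ℝ × (Fin k → ℝ))), IsProbabilityMeasure ν →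
      ∀ (piK : Kernel (ℝ × (Fin k → ℝ)) ℝ), IsMarkovKernel piK →
      ∀ (g : ℕ → Kernel ((ℕ → ℝ) × (ℕ → Fin k → ℝ) × ℝ) (Fin k → ℝ)),
        (∀ t, IsMarkovKernel (g t)) →
      ∀ (y₀ : ℕ → ℝ) (x₀ : ℕ → Fin k → ℝ),
      -- φ is absolutely integrable under the induced joint law
      (∫⁻ p, ∫⁻ a, pathLint (volume.restrict (Set.Ioi (0:ℝ)))
          (fun _ y' ylag x' a' => weibullDensity α γ β y' ylag x' a') g
          (fun y' x' => ENNReal.ofReal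
            |Real.exp (-((∑ i, xtil i * β i) / α) - γ * ytillag / α) *
              (Real.Gamma (1 + 1 / α) * Real.Gamma T / Real.Gamma ((T : ℝ) + 1 / α)) *
              weibullPbar α γ β T y' x' ^ (1 / α)|) a T 1
          (Function.update y₀ 0 p.1) (Function.update x₀ 1 p.2) ∂(piK p) ∂ν) ≠ ⊤ →
      -- h is absolutely integrable under the induced joint law
      (∫⁻ p, ∫⁻ a, ENNReal.ofReal
          |Real.Gamma (1 + 1 / α) *
            Real.exp (-((∑ i, xtil i * β i) / α) - γ * ytillag / α) *
            Real.exp (-(a / α))| ∂(piK p) ∂ν) ≠ ⊤ →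
      (∫ p, ∫ a, pathInt (volume.restrict (Set.Ioi (0:ℝ)))
          (fun _ y' ylag x' a' => weibullDensity α γ β y' ylag x' a') g
          (fun y' x' =>
            Real.exp (-((∑ i, xtil i * β i) / α) - γ * ytillag / α) *
              (Real.Gamma (1 + 1 / α) * Real.Gamma T / Real.Gamma ((T : ℝ) + 1 / α)) *
              weibullPbar α γ β T y' x' ^ (1 / α)) a T 1
          (Function.update y₀ 0 p.1) (Function.update x₀ 1 p.2) ∂(piK p) ∂ν) =
        Real.Gamma (1 + 1 / α) *
          Real.exp (-((∑ i, xtil i * β i) / α) - γ * ytillag / α) *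
          ∫ p, ∫ a, Real.exp (-(a / α)) ∂(piK p) ∂ν) := by
  set e₀ := exp (-((∑ i, xtil i * β i) / α) - γ * ytillag / α)
  set C := e₀ * (Gamma (1 + 1 / α) * Gamma T / Gamma ((T : ℝ) + 1 / α)) with hC
  set h : ℝ → ℝ := fun a => Gamma (1 + 1 / α) * e₀ * exp (-(a / α))
  have hp : 0 ≤ 1 / α := by positivity
  have hd (a : ℝ) : 0 ≤ exp (-a) := (exp_pos _).le
  have hmoment (a : ℝ) : C * (expSmoothing (exp (-a)))^[T] (· ^ (1 / α)) 0 = h a := by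
    have hΓT : Gamma T ≠ 0 := (Gamma_pos_of_pos (by positivity)).ne'
    have hΓTp : Gamma (T + 1 / α) ≠ 0 := (Gamma_pos_of_pos (by positivity)).ne'
    rw [iterate_expSmoothing_rpow_zero hp (hd a) (by omega), ← exp_mul, neg_mul,
      ← div_eq_mul_one_div, hC]
    calc e₀ * (Gamma (1 + 1 / α) * Gamma T / Gamma (T + 1 / α)) *
          (exp (-(a / α)) * Gamma (T + 1 / α) / Gamma T)
        = h a * (Gamma T / Gamma T) * (Gamma (T + 1 / α) / Gamma (T + 1 / α)) := by ring
      _ = h a := by rw [div_self hΓT, div_self hΓTp, mul_one, mul_one]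
  refine ⟨fun y x a => ?_, fun s hs hsT y x x' a hxx => ?_, fun ν _ piK _ g hg y₀ x₀ _ _ => ?_⟩
  · refine (iterInt_weibull_eq_iterate γ β hα (fun c => C * c ^ (1 / α) - h a) a x T T
      (zero_add T) y).trans ?_
    rw [weibullPbar_zero, iterate_expSmoothing_affine hp (hd a) _ _ _ le_rfl, hmoment, sub_self]
  · obtain ⟨t, rfl⟩ : ∃ t, s = t + 1 := ⟨s - 1, by omega⟩
    have hΨ (x : ℕ → Fin k → ℝ) := iterInt_weibull_eq_iterate γ β hα
      (fun c => C * c ^ (1 / α) - h a) a x T (T - (t + 1) + 1) (t := t) (by omega) y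
    rw [hΨ x, hΨ x', weibullPbar_congr_right γ β y fun r hr => hxx r (by omega)]
  · have hpath (y : ℕ → ℝ) (x : ℕ → Fin k → ℝ) (a : ℝ) :
        pathInt (volume.restrict (Ioi 0))
          (fun _ y' ylag x' a' => weibullDensity α γ β y' ylag x' a') g
          (fun y' x' => C * weibullPbar α γ β T y' x' ^ (1 / α)) a T 1 y x = h a := by
      obtain ⟨n, hn⟩ : ∃ n, T = n + 1 := ⟨T - 1, by omega⟩
      have hΨ := pathInt_weibull_eq_iterate γ β hα g (fun c => C * c ^ (1 / α)) a T n (t := 0)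
        (by omega) y x
      have hlinear := iterate_expSmoothing_affine hp (hd a) C 0 T le_rfl
      simp only [sub_zero] at hlinear
      rw [← hn, weibullPbar_zero] at hΨ
      rw [hΨ, hlinear, hmoment]
    simp_rw [hpath, h, integral_const_mul]

/-- **FHR moment function for the ASF in the Weibull MPH model (equation B.9).** -/
theorem asf_weibull_FHR_moment
    (α : ℝ) (hα : 0 < α) (γ : ℝ) (β : Fin k → ℝ) (T : ℕ) (hT : 2 ≤ T)
    -- the target evaluation point (ỹ₋, x̃) ∈ (0,∞) × ℝ^k
    (ytillag : ℝ) (hytillag : 0 < ytillag) (xtil : Fin k → ℝ) :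
    -- condition (i)
    (∀ (y : ℕ → ℝ) (x : ℕ → Fin k → ℝ) (a : ℝ),
      iterInt (volume.restrict (Set.Ioi (0:ℝ)))
        (fun _ y' ylag x' a' => weibullDensity α γ β y' ylag x' a')
        (fun y' x' =>
          Real.exp (-((∑ i, xtil i * β i) / α) - γ * ytillag / α) *
              (Real.Gamma (1 + 1 / α) * Real.Gamma T / Real.Gamma ((T : ℝ) + 1 / α)) *
              weibullPbar α γ β T y' x' ^ (1 / α) -
            Real.Gamma (1 + 1 / α) *
              Real.exp (-((∑ i, xtil i * β i) / α) - γ * ytillag / α) *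
              Real.exp (-(a / α)))
        a x T 1 y = 0) ∧
    -- condition (ii)
    (∀ s, 2 ≤ s → s ≤ T → ∀ (y : ℕ → ℝ) (x x' : ℕ → Fin k → ℝ) (a : ℝ),
      (∀ i, i < s → x i = x' i) →
      iterInt (volume.restrict (Set.Ioi (0:ℝ)))
        (fun _ y' ylag x'' a' => weibullDensity α γ β y' ylag x'' a')
        (fun y' x'' =>
          Real.exp (-((∑ i, xtil i * β i) / α) - γ * ytillag / α) *
              (Real.Gamma (1 + 1 / α) * Real.Gamma T / Real.Gamma ((T : ℝ) + 1 / α)) *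
              weibullPbar α γ β T y' x'' ^ (1 / α) -
            Real.Gamma (1 + 1 / α) *
              Real.exp (-((∑ i, xtil i * β i) / α) - γ * ytillag / α) *
              Real.exp (-(a / α)))
        a x (T - s + 1) s y =
      iterInt (volume.restrict (Set.Ioi (0:ℝ)))
        (fun _ y' ylag x'' a' => weibullDensity α γ β y' ylag x'' a')
        (fun y' x'' =>
          Real.exp (-((∑ i, xtil i * β i) / α) - γ * ytillag / α) *
              (Real.Gamma (1 + 1 / α) * Real.Gamma T / Real.Gamma ((T : ℝ) + 1 / α)) *
              weibullPbar α γ β T y' x'' ^ (1 / α) -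
            Real.Gamma (1 + 1 / α) *
              Real.exp (-((∑ i, xtil i * β i) / α) - γ * ytillag / α) *
              Real.exp (-(a / α)))
        a x' (T - s + 1) s y) ∧
    -- consequence: E[φ(Y^T, X^T)] equals the average structural function
    (∀ (ν : Measure (ℝ × (Fin k → ℝ))), IsProbabilityMeasure ν →
      ∀ (piK : Kernel (ℝ × (Fin k → ℝ)) ℝ), IsMarkovKernel piK →
      ∀ (g : ℕ → Kernel ((ℕ → ℝ) × (ℕ → Fin k → ℝ) × ℝ) (Fin k → ℝ)),
        (∀ t, IsMarkovKernel (g t)) →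
      ∀ (y₀ : ℕ → ℝ) (x₀ : ℕ → Fin k → ℝ),
      -- φ is absolutely integrable under the induced joint law
      (∫⁻ p, ∫⁻ a, pathLint (volume.restrict (Set.Ioi (0:ℝ)))
          (fun _ y' ylag x' a' => weibullDensity α γ β y' ylag x' a') g
          (fun y' x' => ENNReal.ofReal
            |Real.exp (-((∑ i, xtil i * β i) / α) - γ * ytillag / α) *
              (Real.Gamma (1 + 1 / α) * Real.Gamma T / Real.Gamma ((T : ℝ) + 1 / α)) *
              weibullPbar α γ β T y' x' ^ (1 / α)|) a T 1
          (Function.update y₀ 0 p.1) (Function.update x₀ 1 p.2) ∂(piK p) ∂ν) ≠ ⊤ →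
      -- h is absolutely integrable under the induced joint law
      (∫⁻ p, ∫⁻ a, ENNReal.ofReal
          |Real.Gamma (1 + 1 / α) *
            Real.exp (-((∑ i, xtil i * β i) / α) - γ * ytillag / α) *
            Real.exp (-(a / α))| ∂(piK p) ∂ν) ≠ ⊤ →
      (∫ p, ∫ a, pathInt (volume.restrict (Set.Ioi (0:ℝ)))
          (fun _ y' ylag x' a' => weibullDensity α γ β y' ylag x' a') g
          (fun y' x' =>
            Real.exp (-((∑ i, xtil i * β i) / α) - γ * ytillag / α) *
              (Real.Gamma (1 + 1 / α) * Real.Gamma T / Real.Gamma ((T : ℝ) + 1 / α)) *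
              weibullPbar α γ β T y' x' ^ (1 / α)) a T 1
          (Function.update y₀ 0 p.1) (Function.update x₀ 1 p.2) ∂(piK p) ∂ν) =
        Real.Gamma (1 + 1 / α) *
          Real.exp (-((∑ i, xtil i * β i) / α) - γ * ytillag / α) *
          ∫ p, ∫ a, Real.exp (-(a / α)) ∂(piK p) ∂ν) :=
  asf_weibull_FHR_moment_general α hα γ β T hT ytillag xtil

end WeibullMPH

end
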